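/- Let 𝕋 = ℝ/ℤ and let U : 𝕋 → ℝ be smooth. Define the maps f(U) := U_x (U − ⟨U⟩)_{−x} + ⟨U²⟩ − ⟨U⟩² and g(U) := U_{5x} on C^∞(𝕋,ℝ), where (U − ⟨U⟩)_{−x} denotes the unique zero-average primitive of U − ⟨U⟩. Then their Lie bracket satisfies [f, g](U) = −15 U_{2x} U_{3x} − 10 U_x U_{4x} − 5 U U_{5x} + 5 ⟨U⟩ U_{5x}. -/

import Mathlib

open MeasureTheory intervalIntegral
open scoped ContDiff


/-- The average `⟨F⟩ = ∫_𝕋 F(x) dx` of a (1-periodic) function on the circle. -/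
noncomputable def avg (F : ℝ → ℝ) : ℝ := ∫ x in (0:ℝ)..1, F x

/-- The zero-average primitive `F_{−x}` of a zero-average function `F` on the circle. -/
noncomputable def prim (F : ℝ → ℝ) : ℝ → ℝ := fun x =>
  (∫ t in (0:ℝ)..x, F t) - ∫ s in (0:ℝ)..1, ∫ t in (0:ℝ)..s, F t

/-- The map `f(U) = U_x (U − ⟨U⟩)_{−x} + ⟨U²⟩ − ⟨U⟩²`. -/
noncomputable def opf (F : ℝ → ℝ) : ℝ → ℝ := fun x =>
  deriv F x * prim (fun y => F y - avg F) x + avg (fun y => F y ^ 2) - (avg F) ^ 2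

/-- The map `g(U) = U_{5x}`. -/
noncomputable def opg (F : ℝ → ℝ) : ℝ → ℝ := fun x => iteratedDeriv 5 F x

lemma hasDerivAt_primitive {F : ℝ → ℝ} (hF : Continuous F) (x : ℝ) :
    HasDerivAt (fun u => ∫ t in (0:ℝ)..u, F t) (F x) x :=
  (hF.integral_hasStrictDerivAt 0 x).hasDerivAt

lemma contDiff_primitive {F : ℝ → ℝ} (hF : ContDiff ℝ ∞ F) :
    ContDiff ℝ ∞ (fun u => ∫ t in (0:ℝ)..u, F t) := by
  rw [contDiff_infty_iff_deriv]
  refine ⟨fun x => (hasDerivAt_primitive hF.continuous x).differentiableAt, ?_⟩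
  have h : deriv (fun u => ∫ t in (0:ℝ)..u, F t) = F :=
    funext fun x => (hasDerivAt_primitive hF.continuous x).deriv
  rw [h]; exact hF

lemma hasDerivAt_prim {F : ℝ → ℝ} (hF : Continuous F) (x : ℝ) :
    HasDerivAt (prim F) (F x) x := by
  unfold prim
  exact (hasDerivAt_primitive hF x).sub_const _

lemma contDiff_prim {F : ℝ → ℝ} (hF : ContDiff ℝ ∞ F) : ContDiff ℝ ∞ (prim F) := by
  unfold prim
  exact (contDiff_primitive hF).sub contDiff_const

lemma periodic_deriv1 {f : ℝ → ℝ} (hf : Function.Periodic f 1) :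
    Function.Periodic (deriv f) 1 := by
  intro x
  have h : (fun y => f (y + 1)) = f := funext fun y => hf y
  calc deriv f (x + 1) = deriv (fun y => f (y + 1)) x := (deriv_comp_add_const f 1 x).symm
  _ = deriv f x := by rw [h]

lemma avg_add_mul {F G : ℝ → ℝ} (hF : Continuous F) (hG : Continuous G) (ε : ℝ) :
    avg (fun y => F y + ε * G y) = avg F + ε * avg G := by
  unfold avg
  rw [integral_add (hF.intervalIntegrable _ _)
      ((continuous_const.fun_mul hG).intervalIntegrable _ _), intervalIntegral.integral_const_mul]

lemma avg_quad {F G : ℝ → ℝ} (hF : Continuous F) (hG : Continuous G) (ε : ℝ) :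
    avg (fun y => (F y + ε * G y) ^ 2)
      = avg (fun y => F y ^ 2) + ε * (2 * avg (fun y => F y * G y))
        + ε ^ 2 * avg (fun y => G y ^ 2) := by
  have h : (fun y => (F y + ε * G y) ^ 2)
      = fun y => (F y ^ 2 + ε * (2 * (F y * G y))) + ε ^ 2 * G y ^ 2 := by
    funext y; ring
  rw [h]
  unfold avg
  rw [integral_add (((hF.fun_pow 2).fun_add
        (continuous_const.fun_mul (continuous_const.fun_mul (hF.fun_mul hG)))).intervalIntegrable _ _)
      ((continuous_const.fun_mul (hG.fun_pow 2)).intervalIntegrable _ _),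
    integral_add ((hF.fun_pow 2).intervalIntegrable _ _)
      ((continuous_const.fun_mul (continuous_const.fun_mul (hF.fun_mul hG))).intervalIntegrable _ _),
    intervalIntegral.integral_const_mul, intervalIntegral.integral_const_mul,
    intervalIntegral.integral_const_mul]

lemma prim_add_mul {F G : ℝ → ℝ} (hF : Continuous F) (hG : Continuous G) (ε x : ℝ) :
    prim (fun y => F y + ε * G y) x = prim F x + ε * prim G x := by
  have h1 : ∀ u : ℝ, (∫ t in (0:ℝ)..u, (F t + ε * G t))
      = (∫ t in (0:ℝ)..u, F t) + ε * ∫ t in (0:ℝ)..u, G t := fun u => by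
    rw [integral_add (hF.intervalIntegrable _ _)
        ((continuous_const.fun_mul hG).intervalIntegrable _ _), intervalIntegral.integral_const_mul]
  unfold prim
  simp only [h1]
  rw [integral_add
      (((continuous_primitive (fun a b => hF.intervalIntegrable a b) 0)).intervalIntegrable _ _)
      ((continuous_const.fun_mul
        (continuous_primitive (fun a b => hG.intervalIntegrable a b) 0)).intervalIntegrable _ _),
    intervalIntegral.integral_const_mul]
  ring

lemma iteratedDeriv_add_const_mul {n : ℕ} {f g : ℝ → ℝ} (hf : ContDiff ℝ n f)
    (hg : ContDiff ℝ n g) (ε : ℝ) (x : ℝ) :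
    iteratedDeriv n (fun y => f y + ε * g y) x
      = iteratedDeriv n f x + ε * iteratedDeriv n g x := by
  have h : (fun y => f y + ε * g y) = f + fun y => ε * g y := rfl
  rw [h, ← iteratedDerivWithin_univ, ← iteratedDerivWithin_univ, ← iteratedDerivWithin_univ,
    iteratedDerivWithin_add (Set.mem_univ x) uniqueDiffOn_univ hf.contDiffWithinAt
      ((contDiff_const.mul hg)).contDiffWithinAt,
    iteratedDerivWithin_const_mul (Set.mem_univ x) uniqueDiffOn_univ ε hg.contDiffWithinAt]
section IterFacts
variable {U : ℝ → ℝ}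

lemma contDiff_iteratedDeriv (hU : ContDiff ℝ ∞ U) (i : ℕ) :
    ContDiff ℝ ∞ (iteratedDeriv i U) := by
  rw [iteratedDeriv_eq_iterate]
  exact hU.iterate_deriv i

lemma hasDerivAt_iteratedDeriv (hU : ContDiff ℝ ∞ U) (i : ℕ) (y : ℝ) :
    HasDerivAt (iteratedDeriv i U) (iteratedDeriv (i + 1) U y) y := by
  have h1 : DifferentiableAt ℝ (iteratedDeriv i U) y :=
    ((contDiff_iteratedDeriv hU i).differentiable (by simp)).differentiableAt
  have h2 := h1.hasDerivAt
  rwa [show deriv (iteratedDeriv i U) y = iteratedDeriv (i + 1) U y from by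
    rw [iteratedDeriv_succ]] at h2

lemma periodic_iteratedDeriv (hper : Function.Periodic U 1) (i : ℕ) :
    Function.Periodic (iteratedDeriv i U) 1 := by
  induction i with
  | zero => simpa [iteratedDeriv_zero] using hper
  | succ n ih => rw [iteratedDeriv_succ]; exact periodic_deriv1 ih

lemma avg_iteratedDeriv_succ (hU : ContDiff ℝ ∞ U) (hper : Function.Periodic U 1) (i : ℕ) :
    avg (iteratedDeriv (i + 1) U) = 0 := by
  have h : avg (iteratedDeriv (i + 1) U) = iteratedDeriv i U 1 - iteratedDeriv i U 0 := by
    unfold avg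
    exact integral_eq_sub_of_hasDerivAt (fun t _ => hasDerivAt_iteratedDeriv hU i t)
      ((contDiff_iteratedDeriv hU (i + 1)).continuous.intervalIntegrable _ _)
  rw [h, show (1:ℝ) = 0 + 1 by ring, periodic_iteratedDeriv hper i 0, sub_self]

lemma prim_iteratedDeriv_succ (hU : ContDiff ℝ ∞ U) (hper : Function.Periodic U 1) (i : ℕ)
    (x : ℝ) : prim (iteratedDeriv (i + 2) U) x = iteratedDeriv (i + 1) U x := by
  have hint : ∀ u : ℝ, (∫ t in (0:ℝ)..u, iteratedDeriv (i + 2) U t)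
      = iteratedDeriv (i + 1) U u - iteratedDeriv (i + 1) U 0 := fun u =>
    integral_eq_sub_of_hasDerivAt (fun t _ => hasDerivAt_iteratedDeriv hU (i + 1) t)
      ((contDiff_iteratedDeriv hU (i + 2)).continuous.intervalIntegrable _ _)
  unfold prim
  simp only [hint]
  rw [integral_sub ((contDiff_iteratedDeriv hU (i + 1)).continuous.intervalIntegrable _ _)
      intervalIntegrable_const]
  have h2 : (∫ s in (0:ℝ)..1, iteratedDeriv (i + 1) U s) = 0 :=
    avg_iteratedDeriv_succ hU hper i
  rw [h2]
  simp

lemma avg_mul_iteratedDeriv5 (hU : ContDiff ℝ ∞ U) (hper : Function.Periodic U 1) :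
    avg (fun y => U y * iteratedDeriv 5 U y) = 0 := by
  set G : ℝ → ℝ := fun y => U y * iteratedDeriv 4 U y
      - iteratedDeriv 1 U y * iteratedDeriv 3 U y + iteratedDeriv 2 U y ^ 2 / 2 with hG
  have hU0 : ∀ y : ℝ, HasDerivAt U (iteratedDeriv 1 U y) y := by
    intro y
    have := hasDerivAt_iteratedDeriv hU 0 y
    rwa [iteratedDeriv_zero] at this
  have hGd : ∀ y : ℝ, HasDerivAt G (U y * iteratedDeriv 5 U y) y := by
    intro y
    have h := (((hU0 y).fun_mul (hasDerivAt_iteratedDeriv hU 4 y)).fun_sub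
        ((hasDerivAt_iteratedDeriv hU 1 y).fun_mul (hasDerivAt_iteratedDeriv hU 3 y))).fun_add
      (((hasDerivAt_iteratedDeriv hU 2 y).fun_pow 2).div_const 2)
    exact h.congr_deriv (by push_cast; ring)
  have hint : avg (fun y => U y * iteratedDeriv 5 U y) = G 1 - G 0 := by
    unfold avg
    exact integral_eq_sub_of_hasDerivAt (fun t _ => hGd t)
      ((hU.continuous.mul (contDiff_iteratedDeriv hU 5).continuous).intervalIntegrable _ _)
  have hG1 : G 1 = G 0 := by
    simp only [hG]
    rw [show (1:ℝ) = 0 + 1 by norm_num, hper 0, periodic_iteratedDeriv hper 1 0,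
      periodic_iteratedDeriv hper 2 0, periodic_iteratedDeriv hper 3 0,
      periodic_iteratedDeriv hper 4 0]
  rw [hint, hG1, sub_self]

end IterFacts



lemma opf_expand {F G : ℝ → ℝ} (hF : ContDiff ℝ ∞ F) (hG : ContDiff ℝ ∞ G) (ε x : ℝ) :
    opf (fun y => F y + ε * G y) x
      = (deriv F x + ε * deriv G x)
          * (prim (fun y => F y - avg F) x + ε * prim (fun y => G y - avg G) x)
        + (avg (fun y => F y ^ 2) + ε * (2 * avg (fun y => F y * G y))
            + ε ^ 2 * avg (fun y => G y ^ 2))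
        - (avg F + ε * avg G) ^ 2 := by
  have hFc := hF.continuous
  have hGc := hG.continuous
  have hd : deriv (fun y => F y + ε * G y) x = deriv F x + ε * deriv G x := by
    have h1 : HasDerivAt F (deriv F x) x :=
      ((hF.differentiable (by simp)) x).hasDerivAt
    have h2 : HasDerivAt G (deriv G x) x :=
      ((hG.differentiable (by simp)) x).hasDerivAt
    exact (h1.add (h2.const_mul ε)).deriv
  have havg : avg (fun y => F y + ε * G y) = avg F + ε * avg G := avg_add_mul hFc hGc ε
  have hprim : prim (fun y => (F y + ε * G y) - avg (fun y => F y + ε * G y)) x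
      = prim (fun y => F y - avg F) x + ε * prim (fun y => G y - avg G) x := by
    have h : (fun y => (F y + ε * G y) - avg (fun y => F y + ε * G y))
        = fun y => (F y - avg F) + ε * (G y - avg G) := by
      funext y; rw [havg]; ring
    rw [h, prim_add_mul (F := fun y => F y - avg F) (G := fun y => G y - avg G) (hFc.sub continuous_const) (hGc.sub continuous_const)]
  show deriv (fun y => F y + ε * G y) x
      * prim (fun y => (F y + ε * G y) - avg (fun y => F y + ε * G y)) x
      + avg (fun y => (F y + ε * G y) ^ 2) - avg (fun y => F y + ε * G y) ^ 2 = _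
  rw [hd, hprim, avg_quad hFc hGc, havg]

lemma opg_expand {F G : ℝ → ℝ} (hF : ContDiff ℝ ∞ F) (hG : ContDiff ℝ ∞ G) (ε x : ℝ) :
    opg (fun y => F y + ε * G y) x = opg F x + ε * opg G x := by
  show iteratedDeriv 5 (fun y => F y + ε * G y) x = iteratedDeriv 5 F x + ε * iteratedDeriv 5 G x
  exact iteratedDeriv_add_const_mul (hF.of_le (by norm_cast))
    (hG.of_le (by norm_cast)) ε x

section Chain
variable {U : ℝ → ℝ}

lemma iteratedDeriv5_opf (hU : ContDiff ℝ ∞ U) (x : ℝ) :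
    iteratedDeriv 5 (opf U) x
      = iteratedDeriv 6 U x * prim (fun y => U y - avg U) x
        + 5 * (iteratedDeriv 5 U x * (U x - avg U))
        + 11 * (deriv U x * iteratedDeriv 4 U x)
        + 15 * (iteratedDeriv 2 U x * iteratedDeriv 3 U x) := by
  set c : ℝ := avg U with hc
  set P : ℝ → ℝ := prim (fun y => U y - c) with hP
  have hPd : ∀ y : ℝ, HasDerivAt P (U y - c) y := fun y =>
    hasDerivAt_prim (hU.continuous.sub continuous_const) y
  have hU0 : ∀ y : ℝ, HasDerivAt U (deriv U y) y := fun y =>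
    ((hU.differentiable (by norm_cast)) y).hasDerivAt
  have hD : ∀ (i : ℕ) (y : ℝ), HasDerivAt (iteratedDeriv i U) (iteratedDeriv (i + 1) U y) y :=
    fun i y => hasDerivAt_iteratedDeriv hU i y
  have hd1 : ∀ y : ℝ, HasDerivAt (deriv U) (iteratedDeriv 2 U y) y := by
    intro y
    have := hD 1 y
    rwa [iteratedDeriv_one] at this
  -- the chain of derivatives
  have h1e : deriv (opf U) = fun y => iteratedDeriv 2 U y * P y + deriv U y * (U y - c) := by
    funext y
    have h : HasDerivAt (opf U) (iteratedDeriv 2 U y * P y + deriv U y * (U y - c)) y := by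
      have hbase : HasDerivAt (fun z => deriv U z * P z)
          (iteratedDeriv 2 U y * P y + deriv U y * (U y - c)) y := (hd1 y).mul (hPd y)
      have : opf U = fun z => deriv U z * P z + (avg (fun w => U w ^ 2) - c ^ 2) := by
        funext z
        show deriv U z * P z + avg (fun w => U w ^ 2) - c ^ 2 = _
        ring
      rw [this]
      exact hbase.add_const _
    exact h.deriv
  have h2e : deriv (fun y => iteratedDeriv 2 U y * P y + deriv U y * (U y - c))
      = fun y => iteratedDeriv 3 U y * P y + 2 * (iteratedDeriv 2 U y * (U y - c))
          + deriv U y * deriv U y := by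
    funext y
    have h := ((hD 2 y).fun_mul (hPd y)).fun_add ((hd1 y).fun_mul ((hU0 y).sub_const c))
    rw [h.deriv]; ring
  have h3e : deriv (fun y => iteratedDeriv 3 U y * P y + 2 * (iteratedDeriv 2 U y * (U y - c))
          + deriv U y * deriv U y)
      = fun y => iteratedDeriv 4 U y * P y + 3 * (iteratedDeriv 3 U y * (U y - c))
          + 4 * (deriv U y * iteratedDeriv 2 U y) := by
    funext y
    have h := (((hD 3 y).fun_mul (hPd y)).fun_add
        (((hD 2 y).fun_mul ((hU0 y).sub_const c)).const_mul 2)).fun_add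
      ((hd1 y).fun_mul (hd1 y))
    rw [h.deriv]; ring
  have h4e : deriv (fun y => iteratedDeriv 4 U y * P y + 3 * (iteratedDeriv 3 U y * (U y - c))
          + 4 * (deriv U y * iteratedDeriv 2 U y))
      = fun y => iteratedDeriv 5 U y * P y + 4 * (iteratedDeriv 4 U y * (U y - c))
          + 7 * (deriv U y * iteratedDeriv 3 U y) + 4 * iteratedDeriv 2 U y ^ 2 := by
    funext y
    have h := (((hD 4 y).fun_mul (hPd y)).fun_add
        (((hD 3 y).fun_mul ((hU0 y).sub_const c)).const_mul 3)).fun_add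
      (((hd1 y).fun_mul (hD 2 y)).const_mul 4)
    rw [h.deriv]; ring
  have h5e : deriv (fun y => iteratedDeriv 5 U y * P y + 4 * (iteratedDeriv 4 U y * (U y - c))
          + 7 * (deriv U y * iteratedDeriv 3 U y) + 4 * iteratedDeriv 2 U y ^ 2)
      = fun y => iteratedDeriv 6 U y * P y + 5 * (iteratedDeriv 5 U y * (U y - c))
          + 11 * (deriv U y * iteratedDeriv 4 U y)
          + 15 * (iteratedDeriv 2 U y * iteratedDeriv 3 U y) := by
    funext y
    have h := ((((hD 5 y).fun_mul (hPd y)).fun_add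
        (((hD 4 y).fun_mul ((hU0 y).sub_const c)).const_mul 4)).fun_add
      (((hd1 y).fun_mul (hD 3 y)).const_mul 7)).fun_add
      (((hD 2 y).fun_pow 2).const_mul 4)
    rw [h.deriv]; push_cast; ring
  calc iteratedDeriv 5 (opf U) x
      = iteratedDeriv 4 (deriv (opf U)) x := by rw [iteratedDeriv_succ']
    _ = iteratedDeriv 3 (deriv (fun y => iteratedDeriv 2 U y * P y + deriv U y * (U y - c))) x :=
        by rw [h1e, iteratedDeriv_succ']
    _ = iteratedDeriv 2 (deriv (fun y => iteratedDeriv 3 U y * P y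
          + 2 * (iteratedDeriv 2 U y * (U y - c)) + deriv U y * deriv U y)) x :=
        by rw [h2e, iteratedDeriv_succ']
    _ = iteratedDeriv 1 (deriv (fun y => iteratedDeriv 4 U y * P y
          + 3 * (iteratedDeriv 3 U y * (U y - c))
          + 4 * (deriv U y * iteratedDeriv 2 U y))) x := by rw [h3e, iteratedDeriv_succ']
    _ = iteratedDeriv 0 (deriv (fun y => iteratedDeriv 5 U y * P y
          + 4 * (iteratedDeriv 4 U y * (U y - c))
          + 7 * (deriv U y * iteratedDeriv 3 U y) + 4 * iteratedDeriv 2 U y ^ 2)) x :=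
        by rw [h4e, iteratedDeriv_succ']
    _ = _ := by rw [h5e, iteratedDeriv_zero]

end Chain

lemma hasDerivAt_affine (a b : ℝ) : HasDerivAt (fun ε : ℝ => a + ε * b) b 0 := by
  simpa using ((hasDerivAt_id (0:ℝ)).mul_const b).const_add a

lemma hasDerivAt_poly (a b p q r s t c d m D : ℝ) :
    HasDerivAt (fun ε : ℝ => (a + ε * b) * (p + ε * q) + (r + ε * (2 * s) + ε ^ 2 * t)
        - (c + ε * d) ^ 2 - (m + ε * D))
      (b * p + a * q + 2 * s - 2 * (c * d) - D) 0 := by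
  have h1 := hasDerivAt_affine a b
  have h2 := hasDerivAt_affine p q
  have h5 := hasDerivAt_affine c d
  have h6 := hasDerivAt_affine m D
  have h3 : HasDerivAt (fun ε : ℝ => r + ε * (2 * s) + ε ^ 2 * t) (2 * s) 0 := by
    have h := (hasDerivAt_affine r (2 * s)).fun_add ((hasDerivAt_pow 2 (0:ℝ)).mul_const t)
    exact h.congr_deriv (by norm_num)
  have h := (((h1.fun_mul h2).fun_add h3).fun_sub (h5.fun_pow 2)).fun_sub h6
  exact h.congr_deriv (by push_cast; ring)

/-- The Lie bracket `[f,g](U)` of `f(U) = U_x (U − ⟨U⟩)_{−x} + ⟨U²⟩ − ⟨U⟩²` and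
`g(U) = U_{5x}` equals `−15U_{2x}U_{3x} − 10U_xU_{4x} − 5UU_{5x} + 5⟨U⟩U_{5x}`. -/
theorem stmt_14 (U : ℝ → ℝ) (hU : ContDiff ℝ (⊤ : ℕ∞) U) (hper : Function.Periodic U 1) :
    ∀ x : ℝ,
      HasDerivAt (fun ε : ℝ =>
          opf (fun y => U y + ε * opg U y) x - opg (fun y => U y + ε * opf U y) x)
        (-15 * iteratedDeriv 2 U x * iteratedDeriv 3 U x
          - 10 * deriv U x * iteratedDeriv 4 U x
          - 5 * U x * iteratedDeriv 5 U x
          + 5 * avg U * iteratedDeriv 5 U x) 0 := by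
  intro x
  have hUinf : ContDiff ℝ ∞ U := hU.of_le (by simp)
  have hGsm : ContDiff ℝ ∞ (opg U) := contDiff_iteratedDeriv hUinf 5
  have hFsm : ContDiff ℝ ∞ (opf U) := by
    unfold opf
    exact (((contDiff_infty_iff_deriv.mp hUinf).2.mul
      (contDiff_prim (hUinf.sub contDiff_const))).add contDiff_const).sub contDiff_const
  have hφ : (fun ε : ℝ =>
        opf (fun y => U y + ε * opg U y) x - opg (fun y => U y + ε * opf U y) x)
      = fun ε : ℝ =>
        (deriv U x + ε * deriv (opg U) x)
          * (prim (fun y => U y - avg U) x + ε * prim (fun y => opg U y - avg (opg U)) x)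
        + (avg (fun y => U y ^ 2) + ε * (2 * avg (fun y => U y * opg U y))
            + ε ^ 2 * avg (fun y => opg U y ^ 2))
        - (avg U + ε * avg (opg U)) ^ 2
        - (opg U x + ε * opg (opf U) x) := by
    funext ε
    rw [opf_expand hUinf hGsm, opg_expand hUinf hFsm]
  rw [hφ]
  have h := hasDerivAt_poly (deriv U x) (deriv (opg U) x) (prim (fun y => U y - avg U) x)
    (prim (fun y => opg U y - avg (opg U)) x) (avg fun y => U y ^ 2)
    (avg fun y => U y * opg U y) (avg fun y => opg U y ^ 2) (avg U) (avg (opg U))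
    (opg U x) (opg (opf U) x)
  convert h using 1
  have e1 : deriv (opg U) x = iteratedDeriv 6 U x := by
    show deriv (iteratedDeriv 5 U) x = _
    rw [← iteratedDeriv_succ]
  have e2 : avg (opg U) = 0 := by
    show avg (iteratedDeriv 5 U) = 0
    exact avg_iteratedDeriv_succ hUinf hper 4
  have e3 : prim (fun y => opg U y - avg (opg U)) x = iteratedDeriv 4 U x := by
    have h' : (fun y => opg U y - avg (opg U)) = iteratedDeriv 5 U := by
      funext y
      rw [e2]
      show iteratedDeriv 5 U y - 0 = _
      ring
    rw [h']
    exact prim_iteratedDeriv_succ hUinf hper 3 x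
  have e4 : avg (fun y => U y * opg U y) = 0 := avg_mul_iteratedDeriv5 hUinf hper
  rw [e3, e1, e2, e4,
    show opg (opf U) x = iteratedDeriv 5 (opf U) x from rfl, iteratedDeriv5_opf hUinf x]
  ring
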